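/- arXiv:2004.11896 — 9 statements merged into one kernel-verified Lean document; each statement's English description precedes it below -/
import Mathlib

section
/- Let m ≥ 2 and k be positive integers with gcd(k,m) = 1, and let α, β ∈ F_{2^m} with β ≠ 0. Then the Taniguchi function f_{k,α,β} on F_{2^m} × F_{2^m} is almost perfect nonlinear if and only if the polynomial X^{2^k+1} + αX + β ∈ F_{2^m}[X] has no root in F_{2^m}. -/
/-- A function `F` on a finite field of characteristic 2 is almost perfect nonlinear (APN)
if for every nonzero `a` and every `b`, the equation `F (x + a) + F x = b` has exactly
0 or 2 solutions `x`. -/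
def IsAPN {G : Type*} [AddCommGroup G] (F : G → G) : Prop :=
  ∀ a : G, a ≠ 0 → ∀ b : G,
    {x : G | F (x + a) + F x = b}.ncard = 0 ∨ {x : G | F (x + a) + F x = b}.ncard = 2

/-- The Taniguchi function `f_{k,α,β}` on `K × K`. -/
def taniguchi {K : Type*} [Field K] (k : ℕ) (α β : K) : K × K → K × K :=
  fun p => (p.1 ^ (2 ^ (2 * k) * (2 ^ k + 1)) + α * p.1 ^ (2 ^ (2 * k)) * p.2 ^ (2 ^ k)
      + β * p.2 ^ (2 ^ k + 1), p.1 * p.2)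

/-!
The Taniguchi function `F` is quadratic: `F (v + u) + F v = B u v + F u` with `B u` additive, so
each equation `F (v + u) + F v = c` has no solution or as many as `B u` has zeros, and `F` is APN
iff `ker (B u) = {0, u}` for every `u ≠ 0`. The second coordinate of `B u` forces a zero `v` of
`B u` to be a multiple `t • u`, and with `q = 2 ^ k`, `s = t ^ q + t`, `u = (a, b)` the first
coordinate becomes the linearized polynomial
`a ^ (q ^ 3 + q ^ 2) * s ^ q ^ 2 + α * a ^ q ^ 2 * b ^ q * s ^ q + β * b ^ (q + 1) * s`.
Since `gcd k m = 1`, `s = 0` exactly when `t ∈ {0, 1}`, i.e. `v ∈ {0, u}`. A zero `s ≠ 0` gives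
the root `X = a ^ q ^ 2 * s ^ q / (b * s)` of `X ^ (q + 1) + α * X + β`, and every root `X`
(nonzero, as `β ≠ 0`) arises in this way from `a = 1`, `b = s ^ q / (s * X)`.
-/

section
variable {G : Type*} [AddCommGroup G]

theorem AddMonoidHom.ncard_fiber_eq_zero_or_card_ker (φ : G →+ G) (c : G) :
    {x | φ x = c}.ncard = 0 ∨ {x | φ x = c}.ncard = Nat.card φ.ker := by
  rcases Set.eq_empty_or_nonempty {x | φ x = c} with h | ⟨x₀, hx₀⟩
  · exact Or.inl (h ▸ Set.ncard_empty G)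
  · right
    have : {x | φ x = c} = (· + x₀) '' φ.ker := by
      ext x
      simp only [Set.mem_ofPred_eq, Set.mem_image, SetLike.mem_coe, AddMonoidHom.mem_ker]
      refine ⟨fun hx => ⟨x - x₀, by simp [hx, hx₀.out], sub_add_cancel x x₀⟩, ?_⟩
      rintro ⟨y, hy, rfl⟩
      simp [hy, hx₀.out]
    rw [this, Set.ncard_image_of_injective _ (add_left_injective x₀), ← Nat.card_coe_set_eq]
    rfl

theorem isAPN_iff_card_ker [Finite G] (F : G → G) (B : G → G →+ G)
    (hF : ∀ a x, F (x + a) + F x = B a x + (F a + F 0)) :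
    IsAPN F ↔ ∀ a ≠ 0, Nat.card (B a).ker = 2 := by
  have fiber (a b : G) : {x | F (x + a) + F x = b} = {x | B a x = b - (F a + F 0)} := by
    simp only [hF, eq_sub_iff_add_eq]
  refine forall₂_congr fun a _ =>
    ⟨fun h => ?_, fun h b => fiber a b ▸ h ▸ (B a).ncard_fiber_eq_zero_or_card_ker _⟩
  have hker : {x | F (x + a) + F x = F a + F 0}.ncard = Nat.card (B a).ker := by
    rw [fiber, sub_self, ← Nat.card_coe_set_eq]; rfl
  rcases h (F a + F 0) with h0 | h2
  · exact absurd (hker ▸ h0) Nat.card_pos.ne'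
  · exact hker ▸ h2

theorem AddSubgroup.card_eq_two_iff [Finite G] {H : AddSubgroup G} {a : G} (ha : a ≠ 0)
    (haH : a ∈ H) :
    Nat.card H = 2 ↔ ∀ x ∈ H, x = 0 ∨ x = a := by
  have hsub : ({0, a} : Set G) ⊆ H := Set.insert_subset H.zero_mem (Set.singleton_subset_iff.2 haH)
  change Nat.card (H : Set G) = 2 ↔ _
  rw [Nat.card_coe_set_eq, ← Set.ncard_pair ha.symm]
  constructor
  · intro h x hx
    exact (Set.eq_of_subset_of_ncard_le hsub h.le).symm.subset hx
  · intro h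
    exact congrArg Set.ncard (Set.Subset.antisymm (fun x hx => h x hx) hsub)

end

section
variable {K : Type*} [Field K]

theorem FiniteField.pow_eq_self_of_pow_pow_eq_self [Finite K] {p m k : ℕ} [Fact p.Prime] [CharP K p]
    (hK : Nat.card K = p ^ m) (hkm : k.Coprime m) {t : K} (ht : t ^ p ^ k = t) : t ^ p = t := by
  have : Fintype K := Fintype.ofFinite K
  have hk : Function.IsPeriodicPt (frobenius K p) k t := by
    rw [Function.IsPeriodicPt, Function.IsFixedPt, iterate_frobenius, ht]
  have hm : Function.IsPeriodicPt (frobenius K p) m t := by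
    rw [Function.IsPeriodicPt, Function.IsFixedPt, iterate_frobenius, ← hK,
      Nat.card_eq_fintype_card, FiniteField.pow_card]
  simpa [hkm.gcd_eq_one, Function.IsPeriodicPt, Function.IsFixedPt, frobenius_def] using hk.gcd hm

theorem exists_ne_zero_ne_one_of_two_lt_card (h : 2 < Nat.card K) : ∃ t : K, t ≠ 0 ∧ t ≠ 1 := by
  obtain ⟨t, -, ht⟩ := Set.exists_mem_notMem_of_ncard_lt_ncard
    (s := ({0, 1} : Set K)) (t := Set.univ) (by rwa [Set.ncard_pair zero_ne_one, Set.ncard_univ])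
  exact ⟨t, by simpa [not_or] using ht⟩

theorem mul_pow_succ_add_mul_add_eq {q : ℕ} {α β a b s X : K} (hs : s ≠ 0)
    (hX : X * b * s = a ^ q ^ 2 * s ^ q) :
    s * b ^ (q + 1) * (X ^ (q + 1) + α * X + β)
      = a ^ q ^ 3 * a ^ q ^ 2 * s ^ q ^ 2 + α * a ^ q ^ 2 * b ^ q * s ^ q + β * b ^ q * b * s := by
  have hXq : (X * b * s) ^ q = (a ^ q ^ 2 * s ^ q) ^ q := by rw [hX]
  refine mul_left_cancel₀ (pow_ne_zero q hs) ?_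
  linear_combination (a ^ q ^ 2 * s ^ q) * hXq + ((X * b * s) ^ q + α * s ^ q * b ^ q) * hX

theorem exists_eq_smul_of_mul_eq_mul {u v : K × K} (hu : u ≠ 0) (h : u.1 * v.2 = u.2 * v.1) :
    ∃ t : K, v = t • u := by
  by_cases ha : u.1 = 0
  · have hb : u.2 ≠ 0 := fun hb => hu (Prod.ext ha hb)
    refine ⟨v.2 / u.2, Prod.ext ?_ ?_⟩
    · simpa [ha, hb, eq_comm] using h
    · simp [hb]
  · refine ⟨v.1 / u.1, Prod.ext ?_ ?_⟩
    · simp [ha]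
    · simp only [Prod.smul_snd, smul_eq_mul]
      field_simp
      linear_combination h

theorem taniguchi_zero (k : ℕ) (α β : K) : taniguchi k α β 0 = 0 := by
  simp [taniguchi]

end

section
variable {K : Type*} [Field K] [CharP K 2]

theorem add_pow_two_pow_pow (x y : K) (k n : ℕ) :
    (x + y) ^ (2 ^ k) ^ n = x ^ (2 ^ k) ^ n + y ^ (2 ^ k) ^ n := by
  rw [← pow_mul]
  exact add_pow_char_pow x y 2 (k * n)

def taniguchiPolar (k : ℕ) (α β : K) (u : K × K) : K × K →+ K × K where
  toFun v := (u.1 ^ (2 ^ k) ^ 3 * v.1 ^ (2 ^ k) ^ 2 + v.1 ^ (2 ^ k) ^ 3 * u.1 ^ (2 ^ k) ^ 2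
      + α * (u.1 ^ (2 ^ k) ^ 2 * v.2 ^ 2 ^ k + v.1 ^ (2 ^ k) ^ 2 * u.2 ^ 2 ^ k)
      + β * (u.2 ^ 2 ^ k * v.2 + v.2 ^ 2 ^ k * u.2), u.1 * v.2 + u.2 * v.1)
  map_zero' := by simp
  map_add' v w := by
    ext <;> simp only [Prod.fst_add, Prod.snd_add, add_pow_two_pow_pow, add_pow_char_pow] <;> ring

theorem taniguchiPolar_smul_self (k : ℕ) (α β : K) (u : K × K) (t : K) :
    taniguchiPolar k α β u (t • u) =
      (u.1 ^ (2 ^ k) ^ 3 * u.1 ^ (2 ^ k) ^ 2 * (t ^ 2 ^ k + t) ^ (2 ^ k) ^ 2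
        + α * u.1 ^ (2 ^ k) ^ 2 * u.2 ^ 2 ^ k * (t ^ 2 ^ k + t) ^ 2 ^ k
        + β * u.2 ^ 2 ^ k * u.2 * (t ^ 2 ^ k + t), 0) := by
  ext
  · simp only [taniguchiPolar, AddMonoidHom.coe_mk, ZeroHom.coe_mk, Prod.smul_fst, Prod.smul_snd,
      smul_eq_mul, add_pow_two_pow_pow, add_pow_char_pow]
    ring
  · simp only [taniguchiPolar, AddMonoidHom.coe_mk, ZeroHom.coe_mk, Prod.smul_fst, Prod.smul_snd,
      smul_eq_mul]
    linear_combination u.1 * u.2 * t * CharTwo.two_eq_zero (R := K)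

theorem taniguchiPolar_self (k : ℕ) (α β : K) (u : K × K) : taniguchiPolar k α β u u = 0 := by
  simpa [CharTwo.add_self_eq_zero, Prod.mk_zero_zero] using taniguchiPolar_smul_self k α β u 1

theorem taniguchi_add_add (k : ℕ) (α β : K) (u v : K × K) :
    taniguchi k α β (v + u) + taniguchi k α β v
      = taniguchiPolar k α β u v + (taniguchi k α β u + taniguchi k α β 0) := by
  have h2k : 2 ^ (2 * k) = (2 ^ k) ^ 2 := by rw [← pow_mul, mul_comm]
  have h3k : 2 ^ (2 * k) * (2 ^ k + 1) = (2 ^ k) ^ 3 + (2 ^ k) ^ 2 := by rw [h2k]; ring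
  rw [taniguchi_zero, add_zero]
  ext
  · simp only [taniguchi, taniguchiPolar, AddMonoidHom.coe_mk, ZeroHom.coe_mk, h3k, Prod.fst_add,
      Prod.snd_add]
    simp only [h2k, pow_add, pow_one, add_pow_two_pow_pow, add_pow_char_pow]
    rw [← sub_eq_zero, CharTwo.sub_eq_add]
    ring_nf
    simp [CharTwo.two_eq_zero]
  · simp only [taniguchi, taniguchiPolar, AddMonoidHom.coe_mk, ZeroHom.coe_mk, Prod.fst_add,
      Prod.snd_add]
    linear_combination v.1 * v.2 * CharTwo.two_eq_zero (R := K)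

variable {k : ℕ}

theorem exists_mem_ker_taniguchiPolar_of_root {α β t X : K} (hβ : β ≠ 0) (ht : t ^ 2 ^ k ≠ t)
    (hX : X ^ (2 ^ k + 1) + α * X + β = 0) :
    ∃ u ≠ 0, ∃ v ∈ (taniguchiPolar k α β u).ker, v ≠ 0 ∧ v ≠ u := by
  set s := t ^ 2 ^ k + t
  have hs : s ≠ 0 := fun hs => ht (CharTwo.add_eq_zero.1 hs)
  have hX0 : X ≠ 0 := by
    rintro rfl
    simp [hβ] at hX
  set b := s ^ 2 ^ k / (s * X)
  have hP := mul_pow_succ_add_mul_add_eq (q := 2 ^ k) (α := α) (β := β) (a := 1) (b := b) (X := X)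
    hs (by simp only [b, one_pow]; field_simp)
  rw [hX, mul_zero] at hP
  have hu : ((1 : K), b) ≠ 0 := fun h => one_ne_zero (congrArg Prod.fst h)
  refine ⟨(1, b), hu, t • (1, b), ?_, ?_, ?_⟩
  · rw [AddMonoidHom.mem_ker, taniguchiPolar_smul_self, ← hP, Prod.mk_zero_zero]
  · rw [Ne, smul_eq_zero_iff_left hu]
    rintro rfl
    simp at ht
  · intro h
    apply ht
    rw [show t = 1 by simpa using congrArg Prod.fst h, one_pow]

variable [Finite K] {m : ℕ}

theorem pow_two_pow_eq_self_iff (hK : Nat.card K = 2 ^ m) (hkm : k.Coprime m) {t : K} :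
    t ^ 2 ^ k = t ↔ t = 0 ∨ t = 1 := by
  refine ⟨fun ht => ?_, by rintro (rfl | rfl) <;> simp⟩
  have : Fact (Nat.Prime 2) := ⟨Nat.prime_two⟩
  rw [← IsIdempotentElem.iff_eq_zero_or_one, IsIdempotentElem, ← sq]
  exact FiniteField.pow_eq_self_of_pow_pow_eq_self hK hkm ht

theorem eq_zero_or_eq_of_mem_ker_taniguchiPolar (hK : Nat.card K = 2 ^ m) (hkm : k.Coprime m)
    {α β : K} (hroot : ∀ X : K, X ^ (2 ^ k + 1) + α * X + β ≠ 0) {u v : K × K} (hu : u ≠ 0)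
    (hv : v ∈ (taniguchiPolar k α β u).ker) : v = 0 ∨ v = u := by
  rw [AddMonoidHom.mem_ker] at hv
  obtain ⟨t, rfl⟩ :=
    exists_eq_smul_of_mul_eq_mul hu (CharTwo.add_eq_zero.1 (congrArg Prod.snd hv))
  obtain ⟨a, b⟩ := u
  rw [taniguchiPolar_smul_self] at hv
  set s := t ^ 2 ^ k + t
  have hP := congrArg Prod.fst hv
  simp only [Prod.fst_zero] at hP
  by_cases hs0 : s = 0
  · rcases (pow_two_pow_eq_self_iff hK hkm).1 (CharTwo.add_eq_zero.1 hs0) with rfl | rfl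
    · exact Or.inl (zero_smul K _)
    · exact Or.inr (one_smul K _)
  exfalso
  have hb : b ≠ 0 := by
    rintro rfl
    have ha : a ≠ 0 := fun ha => hu (by rw [ha]; rfl)
    simp [ha, hs0] at hP
  apply hroot (a ^ (2 ^ k) ^ 2 * s ^ 2 ^ k / (b * s))
  have hX := mul_pow_succ_add_mul_add_eq (α := α) (β := β) (a := a) (b := b) hs0
    (X := a ^ (2 ^ k) ^ 2 * s ^ 2 ^ k / (b * s)) (by field_simp)
  rw [hP] at hX
  exact (mul_eq_zero.1 hX).resolve_left (mul_ne_zero hs0 (pow_ne_zero _ hb))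

theorem forall_mem_ker_taniguchiPolar_iff (hK : Nat.card K = 2 ^ m) (hm : 2 ≤ m)
    (hkm : k.Coprime m) {α β : K} (hβ : β ≠ 0) :
    (∀ u ≠ 0, ∀ v ∈ (taniguchiPolar k α β u).ker, v = 0 ∨ v = u) ↔
      ∀ X : K, X ^ (2 ^ k + 1) + α * X + β ≠ 0 := by
  refine ⟨fun h X hX => ?_,
    fun h u hu v hv => eq_zero_or_eq_of_mem_ker_taniguchiPolar hK hkm h hu hv⟩
  have h2 : 2 < Nat.card K :=
    hK ▸ (Nat.lt_pow_self (by norm_num)).trans_le (Nat.pow_le_pow_right two_pos hm)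
  obtain ⟨t, ht0, ht1⟩ := exists_ne_zero_ne_one_of_two_lt_card h2
  have ht : t ^ 2 ^ k ≠ t := fun ht => by
    rcases (pow_two_pow_eq_self_iff hK hkm).1 ht with h | h <;> contradiction
  obtain ⟨u, hu, v, hv, hv0, hvu⟩ := exists_mem_ker_taniguchiPolar_of_root hβ ht hX
  exact (h u hu v hv).elim hv0 hvu

end

theorem taniguchi_apn_iff_general (m k : ℕ) (hm : 2 ≤ m) (hgcd : Nat.gcd k m = 1)
    (α β : GaloisField 2 m) (hβ : β ≠ 0) :
    IsAPN (taniguchi k α β) ↔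
      ∀ x : GaloisField 2 m, x ^ (2 ^ k + 1) + α * x + β ≠ 0 := by
  have hK : Nat.card (GaloisField 2 m) = 2 ^ m := GaloisField.card 2 m (by omega)
  rw [isAPN_iff_card_ker _ _ (taniguchi_add_add k α β),
    ← forall_mem_ker_taniguchiPolar_iff hK hm hgcd hβ]
  exact forall₂_congr fun u hu => AddSubgroup.card_eq_two_iff hu (taniguchiPolar_self k α β u)

/-- (Taniguchi) For `m ≥ 2`, `k ≥ 1` with `gcd(k,m) = 1`, and `α, β ∈ F_{2^m}` with `β ≠ 0`,
the Taniguchi function `f_{k,α,β}` is APN if and only if the polynomial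
`X^(2^k+1) + αX + β` has no root in `F_{2^m}`. -/
theorem taniguchi_apn_iff (m k : ℕ) (hm : 2 ≤ m) (hk : 0 < k) (hgcd : Nat.gcd k m = 1)
    (α β : GaloisField 2 m) (hβ : β ≠ 0) :
    IsAPN (taniguchi k α β) ↔
      ∀ x : GaloisField 2 m, x ^ (2 ^ k + 1) + α * x + β ≠ 0 :=
  taniguchi_apn_iff_general m k hm hgcd α β hβ
end

section
/- Let f and g be quadratic functions on F_2^n with f(0) = g(0) = 0, and suppose there exist F_2-linear bijections L, N of F_2^n, an F_2-linear map M of F_2^n, and elements a, b ∈ F_2^n such that f(L(x) + a) = N(g(x)) + M(x) + b for all x. Define D_{f,L,a}(x) = f(L(x)+a) + f(L(x)) + f(a). Then b = f(a), the map D_{f,L,a} is F_2-linear, and f(L(x)) = N(g(x)) + M(x) + D_{f,L,a}(x) for all x; in particular f and g are EL-equivalent via (L, M + D_{f,L,a}, N). -/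
/-- The polar form of a function between abelian groups of exponent 2:
`(a, x) ↦ f (x + a) + f x + f a + f 0`. -/
def polarForm {V W : Type*} [AddCommGroup V] [AddCommGroup W] (f : V → W) (a x : V) : W :=
  f (x + a) + f x + f a + f 0

/-- A function is quadratic (algebraic degree at most 2) if its polar form is additive
in each argument. -/
def IsQuadratic {V W : Type*} [AddCommGroup V] [AddCommGroup W] (f : V → W) : Prop :=
  (∀ a x y : V, polarForm f a (x + y) = polarForm f a x + polarForm f a y) ∧
  (∀ a b x : V, polarForm f (a + b) x = polarForm f a x + polarForm f b x)

/-- Let `f, g` be quadratic functions on `F_2^n` with `f 0 = g 0 = 0`, and suppose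
`f (L x + a) = N (g x) + M x + b` for linear bijections `L, N`, a linear map `M`, and
elements `a, b`.  With `D_{f,L,a} x = f (L x + a) + f (L x) + f a`, one has `b = f a`,
the map `D_{f,L,a}` is `F_2`-linear, and `f (L x) = N (g x) + (M + D_{f,L,a}) x` for all
`x`; in particular `f` and `g` are EL-equivalent via `(L, M + D_{f,L,a}, N)`. -/
theorem ea_implies_el (n : ℕ) (f g : (Fin n → ZMod 2) → (Fin n → ZMod 2))
    (hf : IsQuadratic f) (hg : IsQuadratic g) (hf0 : f 0 = 0) (hg0 : g 0 = 0)
    (L N M : (Fin n → ZMod 2) → (Fin n → ZMod 2))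
    (hL : IsLinearMap (ZMod 2) L) (hN : IsLinearMap (ZMod 2) N)
    (hM : IsLinearMap (ZMod 2) M)
    (hLbij : Function.Bijective L) (hNbij : Function.Bijective N)
    (a b : Fin n → ZMod 2)
    (heq : ∀ x, f (L x + a) = N (g x) + M x + b) :
    b = f a ∧
    IsLinearMap (ZMod 2) (fun x => f (L x + a) + f (L x) + f a) ∧
    ∀ x, f (L x) = N (g x) + (M x + (f (L x + a) + f (L x) + f a)) := by
  have hself : ∀ v : Fin n → ZMod 2, v + v = 0 := by
    intro v
    have : v + v = (2 : ZMod 2) • v := by rw [two_smul]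
    rw [this]
    exact smul_eq_zero_of_left (by decide) v
  have hb : b = f a := by
    have h0 := heq 0
    rw [hL.map_zero, hg0, hN.map_zero, hM.map_zero, zero_add, zero_add, zero_add] at h0
    exact h0.symm
  have hDadd : ∀ x y, f (L (x + y) + a) + f (L (x + y)) + f a =
      (f (L x + a) + f (L x) + f a) + (f (L y + a) + f (L y) + f a) := by
    intro x y
    have h := hf.1 a (L x) (L y)
    simp only [polarForm, hf0, add_zero] at h
    rw [hL.map_add]
    exact h
  have hD0 : f (L 0 + a) + f (L 0) + f a = 0 := by
    rw [hL.map_zero, hf0, zero_add, add_zero, hself]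
  refine ⟨hb, ⟨fun x y => hDadd x y, ?_⟩, ?_⟩
  · intro c x
    rcases (by decide : ∀ c : ZMod 2, c = 0 ∨ c = 1) c with rfl | rfl
    · simp only [zero_smul, hD0]
    · simp only [one_smul]
  · intro x
    have h := heq x
    rw [hb] at h
    rw [h]
    abel_nf
    simp [two_mul, two_nsmul, hself]
end

section
/- Let f be a quadratic function on F_{2^n} with f(0) = 0. Let Aut_EA(f) be the group of affine permutations of F_{2^n} × F_{2^n} of the form (x,y) ↦ (L(x)+a, M(x)+N(y)+b) (with L, N linear bijections, M linear, a, b ∈ F_{2^n}) preserving the graph G_f = {(x, f(x))}, let Aut_EL(f) be the subgroup of those with a = b = 0, and let T_f = {τ_a : a ∈ F_{2^n}} where τ_a(x,y) = (x + a, y + D_{f,I,a}(x) + f(a)) with D_{f,I,a}(x) = f(x+a)+f(x)+f(a). Then T_f is a normal subgroup of Aut_EA(f), T_f ∩ Aut_EL(f) is trivial, Aut_EA(f) = T_f · Aut_EL(f) (i.e. Aut_EA(f) is the internal semidirect product T_f ⋊ Aut_EL(f)), and T_f is isomorphic to the additive group (F_{2^n}, +). -/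
/-- The graph `{(x, f x)}` of a function. -/
def graphOf {V : Type*} (f : V → V) : Set (V × V) := {p | p.2 = f p.1}

/-- An EA-automorphism of `f`: an affine permutation of `V × V` of the shape
`(x, y) ↦ (L x + a, M x + N y + b)` with `L, N` linear bijections and `M` linear,
preserving the graph of `f`. -/
def IsEAAut {V : Type*} [AddCommGroup V] [Module (ZMod 2) V] (f : V → V)
    (σ : Equiv.Perm (V × V)) : Prop :=
  (∃ (L M N : V → V) (a b : V),
      IsLinearMap (ZMod 2) L ∧ IsLinearMap (ZMod 2) M ∧ IsLinearMap (ZMod 2) N ∧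
      Function.Bijective L ∧ Function.Bijective N ∧
      ∀ p : V × V, σ p = (L p.1 + a, M p.1 + N p.2 + b)) ∧
  (⇑σ) '' graphOf f = graphOf f

/-- An EL-automorphism of `f`: a linear permutation of `V × V` of the shape
`(x, y) ↦ (L x, M x + N y)` with `L, N` linear bijections and `M` linear,
preserving the graph of `f`. -/
def IsELAut {V : Type*} [AddCommGroup V] [Module (ZMod 2) V] (f : V → V)
    (σ : Equiv.Perm (V × V)) : Prop :=
  (∃ (L M N : V → V),
      IsLinearMap (ZMod 2) L ∧ IsLinearMap (ZMod 2) M ∧ IsLinearMap (ZMod 2) N ∧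
      Function.Bijective L ∧ Function.Bijective N ∧
      ∀ p : V × V, σ p = (L p.1, M p.1 + N p.2)) ∧
  (⇑σ) '' graphOf f = graphOf f

/-- A translation-type automorphism `τ_a` of `f`:
`τ_a (x, y) = (x + a, y + D_{f,I,a}(x) + f a)` where `D_{f,I,a}(x) = f (x+a) + f x + f a`. -/
def IsTransAut {V : Type*} [AddCommGroup V] (f : V → V) (σ : Equiv.Perm (V × V)) : Prop :=
  ∃ a : V, ∀ p : V × V, σ p = (p.1 + a, p.2 + (f (p.1 + a) + f p.1 + f a) + f a)


section AuxForProof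

variable {V : Type*} [CommRing V]

/-- The translation map `τ_a`. -/
def tauFun (f : V → V) (a : V) (p : V × V) : V × V :=
  (p.1 + a, p.2 + (f (p.1 + a) + f p.1 + f a) + f a)

lemma add_add_self' (h2 : (2 : V) = 0) (x a : V) : x + a + a = x := by
  linear_combination a * h2

lemma tauFun_invol (h2 : (2 : V) = 0) (f : V → V) (a : V) :
    Function.Involutive (tauFun f a) := by
  intro p
  simp only [tauFun, add_add_self' h2]
  refine Prod.ext rfl ?_
  dsimp only
  linear_combination (f (p.1 + a) + f p.1 + 2 * f a) * h2

/-- `τ_a` as a permutation. -/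
def tauPerm (h2 : (2 : V) = 0) (f : V → V) (a : V) : Equiv.Perm (V × V) :=
  (tauFun_invol h2 f a).toPerm

lemma tauPerm_apply (h2 : (2 : V) = 0) (f : V → V) (a : V) (p : V × V) :
    tauPerm h2 f a p = (p.1 + a, p.2 + (f (p.1 + a) + f p.1 + f a) + f a) := rfl

lemma tau_image_graph (h2 : (2 : V) = 0) (f : V → V) (a : V) :
    tauFun f a '' graphOf f = graphOf f := by
  ext ⟨u, v⟩
  constructor
  · rintro ⟨⟨x, y⟩, hxy, hmap⟩
    simp only [graphOf, Set.mem_setOf_eq] at hxy ⊢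
    subst hxy
    have h1 : x + a = u := congrArg Prod.fst hmap
    have hv : f x + (f (x + a) + f x + f a) + f a = v := congrArg Prod.snd hmap
    subst h1
    linear_combination (f x + f a) * h2 - hv
  · intro hv
    simp only [graphOf, Set.mem_setOf_eq] at hv
    refine ⟨(u + a, f (u + a)), rfl, ?_⟩
    simp only [tauFun, add_add_self' h2]
    refine Prod.ext rfl ?_
    try dsimp only
    linear_combination (f (u + a) + f a) * h2 - hv

lemma isLinearMap_of_additive {V W : Type*} [AddCommGroup V] [Module (ZMod 2) V]
    [AddCommGroup W] [Module (ZMod 2) W] {g : V → W}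
    (hadd : ∀ x y, g (x + y) = g x + g y) : IsLinearMap (ZMod 2) g := by
  have hg0 : g 0 = 0 := by
    have h := hadd 0 0
    rw [add_zero] at h
    have h' : g 0 + g 0 = g 0 + 0 := by rw [add_zero]; exact h.symm
    exact add_left_cancel h'
  refine ⟨hadd, fun c x => ?_⟩
  have hc : c = 0 ∨ c = 1 := by
    have h : ∀ d : ZMod 2, d = 0 ∨ d = 1 := by decide
    exact h c
  rcases hc with rfl | rfl
  · rw [zero_smul, zero_smul, hg0]
  · rw [one_smul, one_smul]

end AuxForProof

/-- For a quadratic function `f` on `F_{2^n}` with `f 0 = 0`, the set `T_f` of the maps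
`τ_a` is a normal subgroup of `Aut_EA(f)` intersecting `Aut_EL(f)` trivially, every
EA-automorphism factors as an element of `T_f` times an EL-automorphism (so
`Aut_EA(f) = T_f ⋊ Aut_EL(f)`), and `T_f` is isomorphic to the additive group of
`F_{2^n}`. -/


theorem autEA_semidirect (n : ℕ) (f : GaloisField 2 n → GaloisField 2 n)
    (hf : IsQuadratic f) (hf0 : f 0 = 0) :
    (∀ σ, IsTransAut f σ → IsEAAut f σ) ∧
    (∀ σ τ, IsEAAut f σ → IsTransAut f τ → IsTransAut f (σ * τ * σ⁻¹)) ∧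
    (∀ σ, IsTransAut f σ → IsELAut f σ → σ = 1) ∧
    (∀ σ, IsEAAut f σ → ∃ τ ρ, IsTransAut f τ ∧ IsELAut f ρ ∧ σ = τ * ρ) ∧
    (∃ e : GaloisField 2 n → Equiv.Perm (GaloisField 2 n × GaloisField 2 n),
      (∀ a, IsTransAut f (e a)) ∧ (∀ σ, IsTransAut f σ → ∃! a, e a = σ) ∧
      ∀ a b, e (a + b) = e a * e b) := by
  have h2 : (2 : GaloisField 2 n) = 0 := by
    have := CharP.cast_eq_zero (GaloisField 2 n) 2
    exact_mod_cast this
  have hphi : ∀ a x y : GaloisField 2 n, f (x + y + a) + f (x + y) + f a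
      = (f (x + a) + f x + f a) + (f (y + a) + f y + f a) := by
    intro a x y
    have h := hf.1 a x y
    simpa only [polarForm, hf0, add_zero] using h
  have hgr : ∀ (σ : Equiv.Perm (GaloisField 2 n × GaloisField 2 n))
      (L M N : GaloisField 2 n → GaloisField 2 n) (a₀ b₀ : GaloisField 2 n),
      (∀ p : GaloisField 2 n × GaloisField 2 n, σ p = (L p.1 + a₀, M p.1 + N p.2 + b₀)) →
      (⇑σ '' graphOf f = graphOf f) →
      ∀ x, f (L x + a₀) = M x + N (f x) + b₀ := by
    intro σ L M N a₀ b₀ hform himg x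
    have hx : ((x, f x) : _ × _) ∈ graphOf f := rfl
    have h1 : σ (x, f x) ∈ graphOf f := by
      rw [← himg]; exact Set.mem_image_of_mem _ hx
    rw [hform] at h1
    exact h1.symm
  refine ⟨?_, ?_, ?_, ?_, ?_⟩
  · -- τ_a is an EA automorphism
    rintro σ ⟨a, hτ⟩
    have hcoe : ⇑σ = tauFun f a := funext fun p => hτ p
    constructor
    · refine ⟨id, fun x => f (x + a) + f x + f a, id, a, f a,
        ⟨fun _ _ => rfl, fun _ _ => rfl⟩, ?_, ⟨fun _ _ => rfl, fun _ _ => rfl⟩,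
        Function.bijective_id, Function.bijective_id, ?_⟩
      · exact isLinearMap_of_additive fun x y => hphi a x y
      · intro p
        rw [hτ]
        refine Prod.ext rfl ?_
        simp only [id_eq]
        ring
    · rw [hcoe]
      exact tau_image_graph h2 f a
  · -- normality
    rintro σ τ ⟨⟨L, M, N, a₀, b₀, hL, hM, hN, hLb, hNb, hform⟩, himg⟩ ⟨c, hτ⟩
    have hg := hgr σ L M N a₀ b₀ hform himg
    refine ⟨L c, fun p => ?_⟩
    have hmul : (σ * τ * σ⁻¹) p = σ (τ (σ⁻¹ p)) := rfl
    rw [hmul]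
    conv_rhs => rw [← (show σ (σ⁻¹ p) = p from Equiv.apply_symm_apply σ p)]
    generalize σ⁻¹ p = q
    rw [hτ, hform, hform]
    try dsimp only
    rw [hL.map_add]
    rw [show L q.1 + a₀ + L c = L (q.1 + c) + a₀ from by rw [hL.map_add]; ring]
    rw [hg (q.1 + c), hg q.1, hM.map_add]
    simp only [hN.map_add]
    refine Prod.ext ?_ ?_
    · dsimp only; rw [hL.map_add]; try ring
    · dsimp only
      linear_combination (N (f c) - M q.1 - b₀ - f (L c)) * h2
  · -- trivial intersection
    rintro σ ⟨a, hτ⟩ ⟨⟨L, M, N, hL, hM, hN, _, _, hform⟩, _⟩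
    have h00 : σ (0, 0) = (a, f a) := by
      rw [hτ]
      try dsimp only
      rw [zero_add]
      refine Prod.ext rfl ?_
      try dsimp only
      rw [hf0]
      linear_combination (f a) * h2
    have h00' : σ (0, 0) = (0, 0) := by
      rw [hform]
      try dsimp only
      rw [hL.map_zero, hM.map_zero, hN.map_zero, add_zero]
    have ha : a = 0 := (congrArg Prod.fst (h00'.symm.trans h00)).symm
    subst ha
    apply Equiv.ext
    intro p
    rw [hτ]
    show _ = p
    rw [add_zero, hf0]
    refine Prod.ext rfl ?_
    try dsimp only
    linear_combination (f p.1) * h2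
  · -- decomposition
    rintro σ ⟨⟨L, M, N, a₀, b₀, hL, hM, hN, hLb, hNb, hform⟩, himg⟩
    have hg := hgr σ L M N a₀ b₀ hform himg
    have hb : b₀ = f a₀ := by
      have h := hg 0
      rw [hL.map_zero, hM.map_zero, hf0, hN.map_zero, zero_add, zero_add, zero_add] at h
      exact h.symm
    refine ⟨tauPerm h2 f a₀, tauPerm h2 f a₀ * σ, ⟨a₀, fun p => rfl⟩, ?_, ?_⟩
    · constructor
      · refine ⟨L, fun x => M x + (f (L x + a₀) + f (L x) + f a₀), N, hL, ?_, hN, hLb, hNb, ?_⟩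
        · apply isLinearMap_of_additive
          intro x y
          rw [hL.map_add, hM.map_add]
          linear_combination hphi a₀ (L x) (L y)
        · intro p
          show tauFun f a₀ (σ p) = _
          rw [hform]
          simp only [tauFun]
          try dsimp only
          rw [add_add_self' h2, hb]
          refine Prod.ext rfl ?_
          try dsimp only
          linear_combination (f a₀) * h2
      · show ⇑(tauPerm h2 f a₀ * σ) '' graphOf f = graphOf f
        rw [Equiv.Perm.coe_mul, Set.image_comp, himg]
        exact tau_image_graph h2 f a₀
    · rw [← mul_assoc]
      have hττ : tauPerm h2 f a₀ * tauPerm h2 f a₀ = 1 := by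
        apply Equiv.ext
        intro p
        exact tauFun_invol h2 f a₀ p
      rw [hττ, one_mul]
  · -- isomorphism with the additive group
    refine ⟨fun a => tauPerm h2 f a, fun a => ⟨a, fun p => rfl⟩, ?_, ?_⟩
    · rintro σ ⟨a, hτ⟩
      refine ⟨a, ?_, ?_⟩
      · apply Equiv.ext
        intro p
        exact (hτ p).symm
      · intro a' h'
        have h0 : tauPerm h2 f a' (0, 0) = σ (0, 0) :=
          congrArg (fun g : Equiv.Perm _ => g (0, 0)) h'
        rw [hτ, tauPerm_apply] at h0
        have h1 := congrArg Prod.fst h0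
        simpa using h1
    · intro a b
      apply Equiv.ext
      intro p
      show tauFun f (a + b) p = tauFun f a (tauFun f b p)
      simp only [tauFun]
      try dsimp only
      rw [show p.1 + b + a = p.1 + (a + b) from by ring]
      refine Prod.ext rfl ?_
      try dsimp only
      linear_combination (f (a + b) - f (p.1 + b) - f b - f a) * h2
end

section
/- Let m ≥ 2 be an even integer and let k be an integer with 0 < k < m/2 and gcd(k,m) = 1. Let β, γ ∈ F_{2^m}^* be non-cubes. Then the Taniguchi APN function f_{k,0,β} on F_{2^m} × F_{2^m} is linearly equivalent to the Pott-Zhou APN function g_{k,2k,γ} on F_{2^m} × F_{2^m}. -/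
/-- The Pott-Zhou function `g_{k,s,α}` on `K × K`. -/
def pottZhou {K : Type*} [Field K] (k s : ℕ) (α : K) : K × K → K × K :=
  fun p => (p.1 ^ (2 ^ k + 1) + α * p.2 ^ (2 ^ s * (2 ^ k + 1)), p.1 * p.2)

/-- Two functions on a finite-dimensional `F_2`-vector space are linearly equivalent if
`f ∘ A₁ = A₂ ∘ g` for some `F_2`-linear bijections `A₁, A₂`. -/
def LinEquivalent {V : Type*} [AddCommGroup V] [Module (ZMod 2) V] (f g : V → V) : Prop :=
  ∃ A₁ A₂ : V → V, IsLinearMap (ZMod 2) A₁ ∧ IsLinearMap (ZMod 2) A₂ ∧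
    Function.Bijective A₁ ∧ Function.Bijective A₂ ∧ ∀ v, f (A₁ v) = A₂ (g v)

/-- If `d` divides `2^a - 1` and `2^b - 1`, it divides `2^(gcd a b) - 1`. -/
lemma aux_dvd_pow_gcd (d a b : ℕ) (ha : 0 < a) (h1 : d ∣ 2 ^ a - 1) (h2 : d ∣ 2 ^ b - 1) :
    d ∣ 2 ^ Nat.gcd a b - 1 := by
  rcases Nat.eq_zero_or_pos d with rfl | hd
  · have h1' : 2 ^ a - 1 = 0 := Nat.eq_zero_of_zero_dvd h1
    have : 2 ≤ 2 ^ a := by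
      calc (2:ℕ) = 2 ^ 1 := (pow_one 2).symm
      _ ≤ 2 ^ a := Nat.pow_le_pow_right (by norm_num) ha
    omega
  haveI : NeZero d := ⟨hd.ne'⟩
  have key : ∀ c : ℕ, d ∣ 2 ^ c - 1 → (2 : ZMod d) ^ c = 1 := by
    intro c hc
    have h2c : (1:ℕ) ≤ 2 ^ c := Nat.one_le_two_pow
    have h0 : ((2 ^ c - 1 : ℕ) : ZMod d) = 0 := (ZMod.natCast_eq_zero_iff _ _).mpr hc
    rw [Nat.cast_sub h2c] at h0
    push_cast at h0
    rwa [sub_eq_zero] at h0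
  have hu : (2 : ZMod d) * 2 ^ (a - 1) = 1 := by
    rw [← pow_succ']
    have : a - 1 + 1 = a := by omega
    rw [this]
    exact key a h1
  set u : (ZMod d)ˣ := ⟨2, 2 ^ (a - 1), hu, by rwa [mul_comm] at hu⟩ with hudef
  have hua : u ^ a = 1 := by
    ext
    rw [Units.val_pow_eq_pow_val]
    simpa [hudef] using key a h1
  have hub : u ^ b = 1 := by
    ext
    rw [Units.val_pow_eq_pow_val]
    simpa [hudef] using key b h2
  have hdvd : orderOf u ∣ Nat.gcd a b :=
    Nat.dvd_gcd (orderOf_dvd_of_pow_eq_one hua) (orderOf_dvd_of_pow_eq_one hub)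
  have hg : u ^ Nat.gcd a b = 1 := orderOf_dvd_iff_pow_eq_one.mp hdvd
  have h2g : (2 : ZMod d) ^ Nat.gcd a b = 1 := by
    have := congrArg Units.val hg
    rwa [Units.val_pow_eq_pow_val] at this
  have : ((2 ^ Nat.gcd a b - 1 : ℕ) : ZMod d) = 0 := by
    rw [Nat.cast_sub Nat.one_le_two_pow]
    push_cast
    rw [h2g]
    ring
  exact (ZMod.natCast_eq_zero_iff _ _).mp this

lemma aux_gcd_E (m k : ℕ) (hm : 2 ≤ m) (hmeven : Even m) (hk : 0 < k)
    (hgcd : Nat.gcd k m = 1) :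
    Nat.gcd (2 ^ (2 * k) * (2 ^ k + 1)) (2 ^ m - 1) = 3 := by
  obtain ⟨j, hj⟩ := hmeven
  have hjm : m = 2 * j := by omega
  have hkodd : k % 2 = 1 := by
    rcases Nat.even_or_odd k with he | ho
    · exfalso
      have h2 : 2 ∣ Nat.gcd k m := Nat.dvd_gcd he.two_dvd ⟨j, hjm⟩
      omega
    · exact Nat.odd_iff.mp ho
  -- 3 ∣ 2^m - 1
  have h4j : (3:ℕ) ∣ 4 ^ j - 1 := by
    have := Nat.sub_dvd_pow_sub_pow 4 1 j
    simpa using this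
  have h1le4j : (1:ℕ) ≤ 4 ^ j := Nat.one_le_pow _ _ (by norm_num)
  have h2m4j : (2:ℕ) ^ m = 4 ^ j := by
    rw [hjm, pow_mul]; norm_num
  have h3n : (3:ℕ) ∣ 2 ^ m - 1 := by rw [h2m4j]; exact h4j
  -- 3 ∣ 2^k + 1
  obtain ⟨j', hj'⟩ : ∃ j', k = 2 * j' + 1 := ⟨k / 2, by omega⟩
  have h4j' : (3:ℕ) ∣ 4 ^ j' - 1 := by
    have := Nat.sub_dvd_pow_sub_pow 4 1 j'
    simpa using this
  have h1le4j' : (1:ℕ) ≤ 4 ^ j' := Nat.one_le_pow _ _ (by norm_num)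
  have h2k4j' : (2:ℕ) ^ k = 2 * 4 ^ j' := by
    rw [hj', pow_succ, pow_mul]
    norm_num
    ring
  have h3k : (3:ℕ) ∣ 2 ^ k + 1 := by
    obtain ⟨t, ht⟩ := h4j'
    have h4e : (4:ℕ) ^ j' = 3 * t + 1 := by omega
    rw [h2k4j', h4e]
    omega
  have hdE : Nat.gcd (2 ^ (2 * k) * (2 ^ k + 1)) (2 ^ m - 1) ∣ 2 ^ (2 * k) * (2 ^ k + 1) :=
    Nat.gcd_dvd_left _ _
  have hdn : Nat.gcd (2 ^ (2 * k) * (2 ^ k + 1)) (2 ^ m - 1) ∣ 2 ^ m - 1 :=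
    Nat.gcd_dvd_right _ _
  have h1le2m1 : (2:ℕ) ≤ 2 ^ m := by
    calc (2:ℕ) = 2 ^ 1 := (pow_one 2).symm
    _ ≤ 2 ^ m := Nat.pow_le_pow_right (by norm_num) (by omega)
  have hnodd : Odd (2 ^ m - 1) := by
    rcases dvd_pow_self 2 (show m ≠ 0 by omega) with ⟨t, ht⟩
    exact ⟨t - 1, by omega⟩
  have hcop2 : Nat.Coprime 2 (Nat.gcd (2 ^ (2 * k) * (2 ^ k + 1)) (2 ^ m - 1)) :=
    (Nat.coprime_two_left.mpr hnodd).coprime_dvd_right hdn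
  have hcopd : Nat.Coprime (Nat.gcd (2 ^ (2 * k) * (2 ^ k + 1)) (2 ^ m - 1)) (2 ^ (2 * k)) :=
    (hcop2.pow_left _).symm
  have hdk1 : Nat.gcd (2 ^ (2 * k) * (2 ^ k + 1)) (2 ^ m - 1) ∣ 2 ^ k + 1 :=
    hcopd.dvd_of_dvd_mul_left hdE
  have hfac : (2:ℕ) ^ k + 1 ∣ 2 ^ (2 * k) - 1 := by
    have h1le : (1:ℕ) ≤ 2 ^ (2 * k) := Nat.one_le_two_pow
    have hint : ((2 ^ k + 1 : ℕ) : ℤ) ∣ ((2 ^ (2 * k) - 1 : ℕ) : ℤ) := by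
      rw [Nat.cast_sub h1le]
      push_cast
      refine ⟨2 ^ k - 1, ?_⟩
      rw [two_mul, pow_add]
      ring
    exact_mod_cast hint
  have hd2k : Nat.gcd (2 ^ (2 * k) * (2 ^ k + 1)) (2 ^ m - 1) ∣ 2 ^ (2 * k) - 1 :=
    hdk1.trans hfac
  have haux := aux_dvd_pow_gcd _ (2 * k) m (by omega) hd2k hdn
  have hgcd2 : Nat.gcd (2 * k) m = 2 := by
    rw [hjm, Nat.gcd_mul_left]
    have h1 : Nat.gcd k j ∣ Nat.gcd k m := Nat.dvd_gcd (Nat.gcd_dvd_left _ _)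
      ((Nat.gcd_dvd_right _ _).trans ⟨2, by omega⟩)
    rw [hgcd] at h1
    rw [Nat.eq_one_of_dvd_one h1]
  rw [hgcd2] at haux
  norm_num at haux
  exact Nat.dvd_antisymm haux (Nat.dvd_gcd (Dvd.dvd.mul_left h3k _) h3n)

lemma aux_exists_root (m k : ℕ) (hm : 2 ≤ m) (hmeven : Even m) (hk : 0 < k)
    (hgcd : Nat.gcd k m = 1) (β γ : GaloisField 2 m) (hβ0 : β ≠ 0) (hγ0 : γ ≠ 0)
    (hβ : ∀ x : GaloisField 2 m, x ^ 3 ≠ β) (hγ : ∀ x : GaloisField 2 m, x ^ 3 ≠ γ) :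
    ∃ (i : ℕ) (a : GaloisField 2 m),
      a ≠ 0 ∧ a ^ (2 ^ (2 * k) * (2 ^ k + 1)) = β * γ ^ (2 ^ i) := by
  obtain ⟨g, hg⟩ := IsCyclic.exists_generator (α := (GaloisField 2 m)ˣ)
  have hcardK : Nat.card (GaloisField 2 m) = 2 ^ m := GaloisField.card 2 m (by omega)
  obtain ⟨n, hnn⟩ : ∃ n : ℕ, Nat.card (GaloisField 2 m)ˣ = n := ⟨_, rfl⟩
  have hnval : n = 2 ^ m - 1 := by rw [← hnn, Nat.card_units, hcardK]
  have hgcdE : Nat.gcd (2 ^ (2 * k) * (2 ^ k + 1)) n = 3 := by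
    rw [hnval]; exact aux_gcd_E m k hm hmeven hk hgcd
  have hgn : g ^ (n : ℤ) = 1 := by
    rw [zpow_natCast, ← hnn]; exact pow_card_eq_one'
  obtain ⟨b, hb⟩ := Subgroup.mem_zpowers_iff.mp (hg (Units.mk0 β hβ0))
  obtain ⟨c, hc⟩ := Subgroup.mem_zpowers_iff.mp (hg (Units.mk0 γ hγ0))
  have hncube : ∀ (x : GaloisField 2 m) (hx : x ≠ 0), (∀ z : GaloisField 2 m, z ^ 3 ≠ x) →
      ∀ e : ℤ, g ^ e = Units.mk0 x hx → ¬ (3:ℤ) ∣ e := by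
    rintro x hx hxnc e he ⟨j, rfl⟩
    apply hxnc ((g ^ j : (GaloisField 2 m)ˣ) : GaloisField 2 m)
    have h1 : (g ^ j) ^ (3:ℕ) = Units.mk0 x hx := by
      rw [← zpow_natCast (g ^ j) 3, ← zpow_mul, mul_comm]
      exact he
    rw [← Units.val_pow_eq_pow_val, h1, Units.val_mk0]
  have hb3 : ¬ (3:ℤ) ∣ b := hncube β hβ0 hβ b hb
  have hc3 : ¬ (3:ℤ) ∣ c := hncube γ hγ0 hγ c hc
  have hi : ∃ (i : ℕ) (s : ℤ), b + (2:ℤ) ^ i * c = 3 * s := by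
    have hbm : b % 3 = 1 ∨ b % 3 = 2 := by omega
    have hcm : c % 3 = 1 ∨ c % 3 = 2 := by omega
    have h : (3:ℤ) ∣ b + c ∨ (3:ℤ) ∣ b + 2 * c := by
      rcases hbm with h1 | h1 <;> rcases hcm with h2 | h2
      · right; omega
      · left; omega
      · left; omega
      · right; omega
    rcases h with ⟨s, hs⟩ | ⟨s, hs⟩
    · exact ⟨0, s, by rw [pow_zero, one_mul]; exact hs⟩
    · exact ⟨1, s, by rw [pow_one]; exact hs⟩
  obtain ⟨i, s, hs⟩ := hi
  have hbez := Nat.gcd_eq_gcd_ab (2 ^ (2 * k) * (2 ^ k + 1)) n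
  rw [hgcdE] at hbez
  refine ⟨i, ((g ^ (Nat.gcdA (2 ^ (2 * k) * (2 ^ k + 1)) n * s) : (GaloisField 2 m)ˣ) :
    GaloisField 2 m), Units.ne_zero _, ?_⟩
  have hexp : Nat.gcdA (2 ^ (2 * k) * (2 ^ k + 1)) n * s * ((2 ^ (2 * k) * (2 ^ k + 1) : ℕ) : ℤ)
      = (b + (2:ℤ) ^ i * c) + (n : ℤ) * (-(Nat.gcdB (2 ^ (2 * k) * (2 ^ k + 1)) n * s)) := by
    rw [hs]
    push_cast at hbez ⊢
    linear_combination (-s) * hbez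
  have hkey : (g ^ (Nat.gcdA (2 ^ (2 * k) * (2 ^ k + 1)) n * s)) ^ (2 ^ (2 * k) * (2 ^ k + 1))
      = Units.mk0 β hβ0 * (Units.mk0 γ hγ0) ^ (2 ^ i) := by
    rw [← zpow_natCast (g ^ (Nat.gcdA (2 ^ (2 * k) * (2 ^ k + 1)) n * s))
      (2 ^ (2 * k) * (2 ^ k + 1)), ← zpow_mul, hexp, zpow_add, zpow_mul, hgn, one_zpow,
      mul_one, zpow_add, hb]
    congr 1
    have h2 : ((2:ℤ) ^ i) * c = c * ((2 ^ i : ℕ) : ℤ) := by push_cast; ring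
    rw [h2, zpow_mul, zpow_natCast, hc]
  rw [← Units.val_pow_eq_pow_val, hkey, Units.val_mul, Units.val_pow_eq_pow_val, Units.val_mk0,
    Units.val_mk0]

/-- For even `m ≥ 2`, `0 < k < m/2` coprime to `m`, and non-cubes `β, γ ∈ F_{2^m}^*`,
the Taniguchi APN function `f_{k,0,β}` is linearly equivalent to the Pott-Zhou APN
function `g_{k,2k,γ}`. -/
theorem taniguchi_alpha_zero_linEquiv_pottZhou (m k : ℕ) (hm : 2 ≤ m) (hmeven : Even m)
    (hk : 0 < k) (hk2 : 2 * k < m) (hgcd : Nat.gcd k m = 1)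
    (β γ : GaloisField 2 m) (hβ0 : β ≠ 0) (hγ0 : γ ≠ 0)
    (hβ : ∀ x : GaloisField 2 m, x ^ 3 ≠ β) (hγ : ∀ x : GaloisField 2 m, x ^ 3 ≠ γ) :
    LinEquivalent (taniguchi k (0 : GaloisField 2 m) β) (pottZhou k (2 * k) γ) := by
  obtain ⟨i, a, ha0, haE⟩ := aux_exists_root m k hm hmeven hk hgcd β γ hβ0 hγ0 hβ hγ
  have hene : (2:ℕ) ^ i ≠ 0 := by positivity
  have hfrob : ∀ x y : GaloisField 2 m,
      (x + y) ^ (2:ℕ) ^ i = x ^ (2:ℕ) ^ i + y ^ (2:ℕ) ^ i :=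
    fun x y => add_pow_char_pow x y 2 i
  have hinj : ∀ x y : GaloisField 2 m, x ^ (2:ℕ) ^ i = y ^ (2:ℕ) ^ i → x = y := by
    intro x y h
    have h1 : (x - y) ^ (2:ℕ) ^ i = 0 := by
      rw [sub_pow_char_pow (p := 2) x y i, h, sub_self]
    exact sub_eq_zero.mp ((pow_eq_zero_iff hene).mp h1)
  have hsc : ∀ c : ZMod 2, c = 0 ∨ c = 1 := by decide
  refine ⟨fun p => (a * p.2 ^ (2:ℕ) ^ i, p.1 ^ (2:ℕ) ^ i),
    fun p => (β * p.1 ^ (2:ℕ) ^ i, a * p.2 ^ (2:ℕ) ^ i), ⟨?_, ?_⟩, ⟨?_, ?_⟩, ?_, ?_, ?_⟩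
  · intro p q
    simp only [Prod.fst_add, Prod.snd_add, hfrob, Prod.mk_add_mk, mul_add]
  · intro c p
    rcases hsc c with rfl | rfl
    · simp [zero_pow hene]
    · simp
  · intro p q
    simp only [Prod.fst_add, Prod.snd_add, hfrob, Prod.mk_add_mk, mul_add]
  · intro c p
    rcases hsc c with rfl | rfl
    · simp [zero_pow hene]
    · simp
  · rw [← Finite.injective_iff_bijective]
    intro p q h
    have h1 := congrArg Prod.fst h
    have h2 := congrArg Prod.snd h
    simp only at h1 h2
    exact Prod.ext_iff.mpr ⟨hinj _ _ h2, hinj _ _ (mul_left_cancel₀ ha0 h1)⟩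
  · rw [← Finite.injective_iff_bijective]
    intro p q h
    have h1 := congrArg Prod.fst h
    have h2 := congrArg Prod.snd h
    simp only at h1 h2
    exact Prod.ext_iff.mpr ⟨hinj _ _ (mul_left_cancel₀ hβ0 h1),
      hinj _ _ (mul_left_cancel₀ ha0 h2)⟩
  · rintro ⟨x, y⟩
    simp only [taniguchi, pottZhou, zero_mul, add_zero, Prod.mk.injEq]
    constructor
    · rw [mul_pow, haE, hfrob, mul_pow γ, mul_add,
        pow_right_comm y, pow_right_comm x]
      ring
    · rw [mul_pow]
      ring
end

section
/- Let m ≥ 2, let k be an integer with 0 < k < m and gcd(k,m) = 1, and let α, β ∈ F_{2^m}^*. Then the following statements are equivalent to 'the polynomial X^{2^k+1} + αX + β ∈ F_{2^m}[X] has no root in F_{2^m}': (a) X^{2^k+1} + X + β/α^{2^{m-k}+1} has no root in F_{2^m}; (b) X^{2^k+1} + X + β^{2^i} has no root in F_{2^m} for each i ∈ {0, …, m−1} (when α = 1); (c) X^{2^{m-k}+1} + X + β has no root in F_{2^m} (when α = 1). -/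
private lemma gf_pow_card (m : ℕ) (hm : m ≠ 0) (a : GaloisField 2 m) : a ^ (2 ^ m) = a := by
  haveI : Fintype (GaloisField 2 m) := Fintype.ofFinite _
  have h := GaloisField.card 2 m hm
  rw [← h, Nat.card_eq_fintype_card]
  exact FiniteField.pow_card a

private lemma gf_frob_lin (m e i : ℕ) (β x : GaloisField 2 m) :
    (x ^ (e + 1) + x + β) ^ (2 ^ i)
      = (x ^ (2 ^ i)) ^ (e + 1) + x ^ (2 ^ i) + β ^ (2 ^ i) := by
  rw [add_pow_char_pow, add_pow_char_pow, ← pow_mul, ← pow_mul, mul_comm (e+1)]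

private lemma gf_root_frob (m e i : ℕ) (β : GaloisField 2 m)
    (h : ∃ x : GaloisField 2 m, x ^ (e + 1) + x + β = 0) :
    ∃ x : GaloisField 2 m, x ^ (e + 1) + x + β ^ (2 ^ i) = 0 := by
  obtain ⟨x, hx⟩ := h
  refine ⟨x ^ (2 ^ i), ?_⟩
  rw [← gf_frob_lin, hx]
  exact zero_pow (by positivity)

private lemma gf_exists_root_frob (m e : ℕ) (hm : m ≠ 0) (β : GaloisField 2 m) (i : ℕ)
    (hi : i ≤ m) :
    (∃ x : GaloisField 2 m, x ^ (e + 1) + x + β = 0) ↔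
      (∃ x : GaloisField 2 m, x ^ (e + 1) + x + β ^ (2 ^ i) = 0) := by
  constructor
  · exact gf_root_frob m e i β
  · intro h
    have h2 := gf_root_frob m e (m - i) (β ^ (2 ^ i)) h
    have : (β ^ (2 ^ i)) ^ (2 ^ (m - i)) = β := by
      rw [← pow_mul, ← pow_add, Nat.add_sub_cancel' hi, gf_pow_card m hm]
    rwa [this] at h2

/-- Transformations of the root-freeness of `X^(2^k+1) + αX + β` over `F_{2^m}`.
Since `α^(2^m) = α`, the element `α^(2^(m-k))` plays the role of `α^(2^(-k))`.
(a) `X^(2^k+1) + αX + β` has no root iff `X^(2^k+1) + X + β·α^(-(2^(m-k)+1))` has no root;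
(b) for each `i < m`, `X^(2^k+1) + X + β` has no root iff `X^(2^k+1) + X + β^(2^i)` has no
root;
(c) `X^(2^k+1) + X + β` has no root iff `X^(2^(m-k)+1) + X + β` has no root. -/
theorem polynomial_transformations (m k : ℕ) (hm : 2 ≤ m) (hk : 0 < k) (hkm : k < m)
    (hgcd : Nat.gcd k m = 1) (α β : GaloisField 2 m) (hα : α ≠ 0) (hβ : β ≠ 0) :
    ((∀ x : GaloisField 2 m, x ^ (2 ^ k + 1) + α * x + β ≠ 0) ↔
      (∀ x : GaloisField 2 m,
        x ^ (2 ^ k + 1) + x + β / α ^ (2 ^ (m - k) + 1) ≠ 0)) ∧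
    (∀ i : ℕ, i < m →
      ((∀ x : GaloisField 2 m, x ^ (2 ^ k + 1) + x + β ≠ 0) ↔
        (∀ x : GaloisField 2 m, x ^ (2 ^ k + 1) + x + β ^ (2 ^ i) ≠ 0))) ∧
    ((∀ x : GaloisField 2 m, x ^ (2 ^ k + 1) + x + β ≠ 0) ↔
      (∀ x : GaloisField 2 m, x ^ (2 ^ (m - k) + 1) + x + β ≠ 0)) := by
  have hm0 : m ≠ 0 := by omega
  have htk : (m - k) + k = m := by omega
  set t := m - k with ht
  refine ⟨?_, ?_, ?_⟩
  · -- part (a)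
    have hc : α ^ (2 ^ t) ≠ 0 := pow_ne_zero _ hα
    have hA : α ^ (2 ^ t + 1) ≠ 0 := pow_ne_zero _ hα
    have key : ∀ y : GaloisField 2 m,
        (α ^ (2 ^ t) * y) ^ (2 ^ k + 1) + α * (α ^ (2 ^ t) * y) + β
          = α ^ (2 ^ t + 1) * (y ^ (2 ^ k + 1) + y + β / α ^ (2 ^ t + 1)) := by
      intro y
      have h1 : (α ^ (2 ^ t)) ^ (2 ^ k + 1) = α ^ (2 ^ t + 1) := by
        rw [← pow_mul]
        have he : 2 ^ t * (2 ^ k + 1) = 2 ^ m + 2 ^ t := by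
          rw [Nat.mul_add, ← pow_add, htk, mul_one]
        rw [he, pow_add, gf_pow_card m hm0, pow_succ, mul_comm]
      rw [mul_pow, h1]
      field_simp
      ring
    constructor
    · intro h y hy
      exact h (α ^ (2 ^ t) * y) (by rw [key y, hy, mul_zero])
    · intro h x hx
      apply h (x / α ^ (2 ^ t))
      have hxx : α ^ (2 ^ t) * (x / α ^ (2 ^ t)) = x := by field_simp
      have hk2 := key (x / α ^ (2 ^ t))
      rw [hxx, hx] at hk2
      exact (mul_eq_zero.mp hk2.symm).resolve_left hA
  · -- part (b)
    intro i hi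
    have equiv := gf_exists_root_frob m (2 ^ k) hm0 β i (le_of_lt hi)
    simp only [← not_exists]
    exact not_congr equiv
  · -- part (c)
    have h2 : (2 : GaloisField 2 m) = 0 := by
      have := CharP.cast_eq_zero (GaloisField 2 m) 2
      simpa using this
    have h1 : (∃ x : GaloisField 2 m, x ^ (2 ^ k + 1) + x + β = 0) ↔
        (∃ x : GaloisField 2 m, x ^ (2 ^ k + 1) + x ^ (2 ^ k) + β = 0) := by
      have keyid : ∀ x : GaloisField 2 m,
          (x + 1) ^ (2 ^ k + 1) + (x + 1) + β = x ^ (2 ^ k + 1) + x ^ (2 ^ k) + β := by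
        intro x
        have hs : (x + 1) ^ (2 ^ k) = x ^ (2 ^ k) + 1 := by
          rw [add_pow_char_pow, one_pow]
        rw [pow_succ, hs, pow_succ]
        linear_combination (x + 1) * h2
      constructor
      · rintro ⟨x, hx⟩
        refine ⟨x + 1, ?_⟩
        have hxx : x + 1 + 1 = x := by linear_combination h2
        rw [← keyid (x + 1), hxx]
        exact hx
      · rintro ⟨x, hx⟩
        exact ⟨x + 1, by rw [keyid x, hx]⟩
    have hmid : ∀ x : GaloisField 2 m,
        (x ^ (2 ^ k + 1) + x ^ (2 ^ k) + β = 0) ↔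
          (x ^ (2 ^ t + 1) + x + β ^ (2 ^ t) = 0) := by
      intro x
      have hid : (x ^ (2 ^ k + 1) + x ^ (2 ^ k) + β) ^ (2 ^ t)
          = x ^ (2 ^ t + 1) + x + β ^ (2 ^ t) := by
        rw [add_pow_char_pow, add_pow_char_pow, ← pow_mul, ← pow_mul]
        have e1 : (2 ^ k + 1) * 2 ^ t = 2 ^ m + 2 ^ t := by
          rw [Nat.add_mul, ← pow_add, one_mul, Nat.add_comm k t, htk]
        have e2 : 2 ^ k * 2 ^ t = 2 ^ m := by rw [← pow_add, Nat.add_comm k t, htk]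
        rw [e1, e2, pow_add, gf_pow_card m hm0, pow_succ]
        ring
      constructor
      · intro hx
        rw [← hid, hx, zero_pow (by positivity)]
      · intro hx
        have := hid
        rw [hx] at this
        exact pow_eq_zero_iff (by positivity) |>.mp this
    have h3 : (∃ x : GaloisField 2 m, x ^ (2 ^ t + 1) + x + β ^ (2 ^ t) = 0) ↔
        (∃ x : GaloisField 2 m, x ^ (2 ^ t + 1) + x + β = 0) :=
      (gf_exists_root_frob m (2 ^ t) hm0 β t (by omega)).symm
    simp only [← not_exists]
    apply not_congr
    rw [h1]
    rw [show (∃ x : GaloisField 2 m, x ^ (2 ^ k + 1) + x ^ (2 ^ k) + β = 0)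
        ↔ (∃ x : GaloisField 2 m, x ^ (2 ^ t + 1) + x + β ^ (2 ^ t) = 0) from
      exists_congr hmid]
    exact h3
end

section
/- Let m ≥ 2 be an integer, let k be an integer with 0 < k < m and gcd(k,m) = 1, and let α, β ∈ F_{2^m}^*. Then the following pairs of Taniguchi functions on F_{2^m} × F_{2^m} are linearly equivalent: (a) f_{k,α,β} and f_{k,1,β·α^{-(2^{m-k}+1)}}; (b) f_{k,1,β^{2^i}} and f_{k,1,β} for every i ∈ {0, …, m−1}; (c) f_{m-k,1,β} and f_{k,1,β}. -/
namespace TaniguchiAux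

variable {m : ℕ}

local notation "K" => GaloisField 2 m

lemma pc (hm : m ≠ 0) (x : K) : x ^ (2 ^ m) = x := by
  have : Fintype K := Fintype.ofFinite _
  have h := GaloisField.card 2 m hm
  rw [Nat.card_eq_fintype_card] at h
  rw [← h]; exact FiniteField.pow_card x

lemma red (hm : m ≠ 0) (x : K) (a : ℕ) : x ^ (2 ^ (a + m)) = x ^ (2 ^ a) := by
  rw [pow_add, pow_mul, pc hm]

lemma split {L : Type*} [Field L] (x : L) (a b : ℕ) :
    x ^ (2 ^ a * (2 ^ b + 1)) = x ^ (2 ^ (a + b)) * x ^ (2 ^ a) := by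
  rw [← pow_add, mul_add, mul_one, ← pow_add]

lemma lin_one (a : K) (s : ℕ) :
    IsLinearMap (ZMod 2) (fun x : K => a * x ^ (2 ^ s)) := by
  constructor
  · intro x y
    rw [add_pow_char_pow x y 2 s, mul_add]
  · intro c x
    have hc : ∀ c : ZMod 2, c = 0 ∨ c = 1 := by decide
    have hs : (2 : ℕ) ^ s ≠ 0 := (Nat.two_pow_pos s).ne'
    rcases hc c with h | h <;> subst h <;> simp [zero_pow hs]

lemma bij_one (a : K) (ha : a ≠ 0) (s : ℕ) :
    Function.Bijective (fun x : K => a * x ^ (2 ^ s)) := by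
  refine Finite.injective_iff_bijective.mp ?_
  intro x y h
  simp only at h
  have h2 : x ^ (2 ^ s) = y ^ (2 ^ s) := mul_left_cancel₀ ha h
  have h3 : (x - y) ^ (2 ^ s) = 0 := by
    rw [sub_pow_char_pow (p := 2) (n := s), h2, sub_self]
  have h4 : x - y = 0 := pow_eq_zero_iff (Nat.two_pow_pos s).ne' |>.mp h3
  exact sub_eq_zero.mp h4

lemma lin_pair {f g : K → K} (hf : IsLinearMap (ZMod 2) f) (hg : IsLinearMap (ZMod 2) g) :
    IsLinearMap (ZMod 2) (fun p : K × K => (f p.1, g p.2)) := by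
  constructor
  · intro p q; simp [Prod.ext_iff, hf.map_add, hg.map_add]
  · intro c p; simp [Prod.ext_iff, hf.map_smul, hg.map_smul]

lemma lin_swap {f g : K → K} (hf : IsLinearMap (ZMod 2) f) (hg : IsLinearMap (ZMod 2) g) :
    IsLinearMap (ZMod 2) (fun p : K × K => (f p.2, g p.1)) := by
  constructor
  · intro p q; simp [Prod.ext_iff, hf.map_add, hg.map_add]
  · intro c p; simp [Prod.ext_iff, hf.map_smul, hg.map_smul]

lemma bij_pair {f g : K → K} (hf : Function.Bijective f) (hg : Function.Bijective g) :
    Function.Bijective (fun p : K × K => (f p.1, g p.2)) :=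
  hf.prodMap hg

lemma bij_swap {f g : K → K} (hf : Function.Bijective f) (hg : Function.Bijective g) :
    Function.Bijective (fun p : K × K => (f p.2, g p.1)) := by
  have : (fun p : K × K => (f p.2, g p.1)) = (Prod.map f g) ∘ Prod.swap := rfl
  rw [this]
  exact (hf.prodMap hg).comp Prod.swap_bijective

end TaniguchiAux

open TaniguchiAux in
/-- For `m ≥ 2`, `0 < k < m` coprime to `m`, and `α, β ∈ F_{2^m}^*`, the following pairs
of Taniguchi functions on `F_{2^m} × F_{2^m}` are linearly equivalent
(`α^(2^(m-k))` plays the role of `α^(2^(-k))`):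
(a) `f_{k,α,β}` and `f_{k,1,β·α^(-(2^(m-k)+1))}`;
(b) `f_{k,1,β^(2^i)}` and `f_{k,1,β}` for every `i < m`;
(c) `f_{m-k,1,β}` and `f_{k,1,β}`. -/
theorem taniguchi_linear_equivalences (m k : ℕ) (hm : 2 ≤ m) (hk : 0 < k) (hkm : k < m)
    (hgcd : Nat.gcd k m = 1) (α β : GaloisField 2 m) (hα : α ≠ 0) (hβ : β ≠ 0) :
    LinEquivalent (taniguchi k α β) (taniguchi k 1 (β / α ^ (2 ^ (m - k) + 1))) ∧
    (∀ i : ℕ, i < m →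
      LinEquivalent (taniguchi k (1 : GaloisField 2 m) (β ^ (2 ^ i)))
        (taniguchi k (1 : GaloisField 2 m) β)) ∧
    LinEquivalent (taniguchi (m - k) (1 : GaloisField 2 m) β)
      (taniguchi k (1 : GaloisField 2 m) β) := by
  have hm0 : m ≠ 0 := by omega
  have hkm' : k ≤ m := hkm.le
  refine ⟨?_, ?_, ?_⟩
  · -- part (a)
    set b : GaloisField 2 m := α⁻¹ ^ (2 ^ (m - k)) with hbdef
    have hb : b ≠ 0 := pow_ne_zero _ (inv_ne_zero hα)
    have key1 : b ^ (2 ^ k) = α⁻¹ := by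
      rw [hbdef, ← pow_mul, ← pow_add, Nat.sub_add_cancel hkm', pc hm0]
    refine ⟨(fun p => ((1:GaloisField 2 m) * p.1 ^ (2 ^ 0), b * p.2 ^ (2 ^ 0))),
      (fun p => ((1:GaloisField 2 m) * p.1 ^ (2 ^ 0), b * p.2 ^ (2 ^ 0))),
      lin_pair (lin_one 1 0) (lin_one b 0), lin_pair (lin_one 1 0) (lin_one b 0),
      bij_pair (bij_one 1 one_ne_zero 0) (bij_one b hb 0),
      bij_pair (bij_one 1 one_ne_zero 0) (bij_one b hb 0), ?_⟩
    rintro ⟨x, y⟩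
    simp only [taniguchi, pow_zero, pow_one, one_mul]
    refine Prod.ext ?_ ?_
    · -- first coordinate
      have e1 : α * x ^ (2 ^ (2 * k)) * (b * y) ^ (2 ^ k)
          = x ^ (2 ^ (2 * k)) * y ^ (2 ^ k) := by
        rw [mul_pow, key1]; field_simp
      have e2 : β * (b * y) ^ (2 ^ k + 1)
          = β / α ^ (2 ^ (m - k) + 1) * y ^ (2 ^ k + 1) := by
        rw [mul_pow, pow_succ b, key1, pow_succ α, hbdef, div_eq_mul_inv, mul_inv, inv_pow]
        ring
      simp only [e1, e2]
    · simp only []; ring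
  · -- part (b)
    intro i _
    refine ⟨(fun p => ((1:GaloisField 2 m) * p.1 ^ (2 ^ i), (1:GaloisField 2 m) * p.2 ^ (2 ^ i))),
      (fun p => ((1:GaloisField 2 m) * p.1 ^ (2 ^ i), (1:GaloisField 2 m) * p.2 ^ (2 ^ i))),
      lin_pair (lin_one 1 i) (lin_one 1 i), lin_pair (lin_one 1 i) (lin_one 1 i),
      bij_pair (bij_one 1 one_ne_zero i) (bij_one 1 one_ne_zero i),
      bij_pair (bij_one 1 one_ne_zero i) (bij_one 1 one_ne_zero i), ?_⟩
    rintro ⟨x, y⟩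
    simp only [taniguchi, one_mul]
    refine Prod.ext ?_ ?_
    · simp only []
      rw [add_pow_char_pow _ _ 2 i, add_pow_char_pow _ _ 2 i, mul_pow, mul_pow]
      ring
    · simp only []
      rw [mul_pow]
  · -- part (c)
    refine ⟨(fun p => (β ^ (2 ^ (2 * k)) * p.2 ^ (2 ^ (2 * k)),
        (1:GaloisField 2 m) * p.1 ^ (2 ^ (2 * k)))),
      (fun p => (β * p.1 ^ (2 ^ (m - k)), β ^ (2 ^ (2 * k)) * p.2 ^ (2 ^ (2 * k)))),
      lin_swap (lin_one _ _) (lin_one 1 _), lin_pair (lin_one β _) (lin_one _ _),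
      bij_swap (bij_one _ (pow_ne_zero _ hβ) _) (bij_one 1 one_ne_zero _),
      bij_pair (bij_one β hβ _) (bij_one _ (pow_ne_zero _ hβ) _), ?_⟩
    rintro ⟨x, y⟩
    simp only [taniguchi, one_mul]
    have hY1 : (x ^ (2 ^ (2 * k))) ^ (2 ^ (m - k)) = x ^ (2 ^ k) := by
      rw [← pow_mul, ← pow_add, show 2 * k + (m - k) = k + m by omega, red hm0]
    have hy1 : (y ^ (2 ^ (2 * k))) ^ (2 ^ (2 * (m - k))) = y := by
      rw [← pow_mul, ← pow_add, show 2 * k + 2 * (m - k) = m + m by omega, red hm0, pc hm0]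
    have hβ1 : (β ^ (2 ^ (2 * k))) ^ (2 ^ (2 * (m - k))) = β := by
      rw [← pow_mul, ← pow_add, show 2 * k + 2 * (m - k) = m + m by omega, red hm0, pc hm0]
    have hy2 : (y ^ (2 ^ (2 * k))) ^ (2 ^ (2 * (m - k) + (m - k))) = y ^ (2 ^ (m - k)) := by
      rw [← pow_mul, ← pow_add, show 2 * k + (2 * (m - k) + (m - k)) = m - k + m + m by omega,
        red hm0, red hm0]
    have hβ2 : (β ^ (2 ^ (2 * k))) ^ (2 ^ (2 * (m - k) + (m - k))) = β ^ (2 ^ (m - k)) := by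
      rw [← pow_mul, ← pow_add, show 2 * k + (2 * (m - k) + (m - k)) = m - k + m + m by omega,
        red hm0, red hm0]
    refine Prod.ext ?_ ?_
    · -- first coordinate
      have hXN : (β ^ (2 ^ (2 * k)) * y ^ (2 ^ (2 * k))) ^ (2 ^ (2 * (m - k)) * (2 ^ (m - k) + 1))
          = β ^ (2 ^ (m - k)) * y ^ (2 ^ (m - k)) * (β * y) := by
        rw [split, mul_pow, mul_pow, hy1, hβ1, hy2, hβ2]
      have hX2 : (β ^ (2 ^ (2 * k)) * y ^ (2 ^ (2 * k))) ^ (2 ^ (2 * (m - k)))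
          = β * y := by
        rw [mul_pow, hy1, hβ1]
      have hYN : (x ^ (2 ^ (2 * k))) ^ (2 ^ (m - k) + 1)
          = x ^ (2 ^ k) * x ^ (2 ^ (2 * k)) := by
        rw [pow_succ, hY1]
      have hRN : (x ^ (2 ^ (2 * k) * (2 ^ k + 1))) ^ (2 ^ (m - k))
          = x ^ (2 ^ (2 * k)) * x ^ (2 ^ k) := by
        have h1 : ((x ^ (2 ^ (2 * k + k))) ^ (2 ^ (m - k))) = x ^ (2 ^ (2 * k)) := by
          rw [← pow_mul, ← pow_add, show 2 * k + k + (m - k) = 2 * k + m by omega, red hm0]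
        rw [split, mul_pow, h1, hY1]
      have hRy : (y ^ (2 ^ k)) ^ (2 ^ (m - k)) = y := by
        rw [← pow_mul, ← pow_add, show k + (m - k) = 0 + m by omega, red hm0, pow_zero, pow_one]
      have hRyN : (y ^ (2 ^ k + 1)) ^ (2 ^ (m - k)) = y * y ^ (2 ^ (m - k)) := by
        rw [pow_succ y, mul_pow, hRy]
      simp only []
      rw [hXN, hX2, hYN, add_pow_char_pow _ _ 2 (m - k), add_pow_char_pow _ _ 2 (m - k),
        mul_pow, mul_pow, hRN, hRy, hRyN, hY1]
      ring
    · -- second coordinate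
      simp only []
      rw [mul_pow]; ring
end

section
/- Let m and k be coprime positive integers with 0 < k < m, and let β, δ ∈ F_{2^m}^* be such that the polynomial X^{2^k+1} + X + β has no root in F_{2^m}. Then the F_2-linear map T on F_{2^m} defined by T(x) = x^{2^{2k}} + δ^{2^k} x^{2^k} + β δ^{2^k+1} x is a bijection of F_{2^m}. -/
/-!
With `q = 2^k` and `y = x^(q-1) / δ` one has `T(x) = x δ^(q+1) (y^(q+1) + y + β)`, so a nonzero
zero of `T` would give a root of `X^(q+1) + X + β`. Hence the additive map `T` is injective, and
therefore bijective on the finite field.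
-/

open Function

theorem linearized_eq_mul_subst {K : Type*} [Field K] {q : ℕ} (hq : 0 < q) {δ : K} (hδ : δ ≠ 0)
    (β x : K) :
    x ^ (q * q) + δ ^ q * x ^ q + β * δ ^ (q + 1) * x =
      x * δ ^ (q + 1) * ((x ^ (q - 1) * δ⁻¹) ^ (q + 1) + x ^ (q - 1) * δ⁻¹ + β) := by
  obtain ⟨n, rfl⟩ := Nat.exists_eq_add_one_of_ne_zero hq.ne'
  rw [Nat.add_sub_cancel, mul_pow, inv_pow]
  field_simp
  ring

theorem eq_zero_of_linearized_eq_zero {K : Type*} [Field K] {q : ℕ} (hq : 0 < q) {β δ : K}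
    (hδ : δ ≠ 0) (hroot : ∀ y : K, y ^ (q + 1) + y + β ≠ 0) {x : K}
    (hx : x ^ (q * q) + δ ^ q * x ^ q + β * δ ^ (q + 1) * x = 0) : x = 0 := by
  rw [linearized_eq_mul_subst hq hδ] at hx
  simpa [hδ, hroot] using hx

theorem bijective_linearized {K : Type*} [Field K] [Finite K] (p : ℕ) [ExpChar K p]
    (k : ℕ) {β δ : K} (hδ : δ ≠ 0) (hroot : ∀ y : K, y ^ (p ^ k + 1) + y + β ≠ 0) :
    Bijective fun x : K => x ^ p ^ (2 * k) + δ ^ p ^ k * x ^ p ^ k + β * δ ^ (p ^ k + 1) * x := by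
  refine Finite.injective_iff_bijective.mp fun a b hab => sub_eq_zero.mp ?_
  refine eq_zero_of_linearized_eq_zero (pow_pos (expChar_pos K p) k) hδ hroot ?_
  rw [← pow_add, ← two_mul, sub_pow_expChar_pow, sub_pow_expChar_pow]
  linear_combination hab

theorem linearized_T_bijective_general (m k : ℕ) (β δ : GaloisField 2 m) (hδ : δ ≠ 0)
    (hroot : ∀ x : GaloisField 2 m, x ^ (2 ^ k + 1) + x + β ≠ 0) :
    Function.Bijective (fun x : GaloisField 2 m =>
      x ^ (2 ^ (2 * k)) + δ ^ (2 ^ k) * x ^ (2 ^ k) + β * δ ^ (2 ^ k + 1) * x) :=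
  bijective_linearized 2 k hδ hroot

/-- Let `0 < k < m` with `gcd(k,m) = 1`, and let `β, δ ∈ F_{2^m}^*` be such that
`X^(2^k+1) + X + β` has no root in `F_{2^m}`.  Then the `F_2`-linear map
`T(x) = x^(2^(2k)) + δ^(2^k)·x^(2^k) + β·δ^(2^k+1)·x` is a bijection of `F_{2^m}`. -/
theorem linearized_T_bijective (m k : ℕ) (hk : 0 < k) (hkm : k < m)
    (hgcd : Nat.gcd k m = 1) (β δ : GaloisField 2 m) (hβ : β ≠ 0) (hδ : δ ≠ 0)
    (hroot : ∀ x : GaloisField 2 m, x ^ (2 ^ k + 1) + x + β ≠ 0) :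
    Function.Bijective (fun x : GaloisField 2 m =>
      x ^ (2 ^ (2 * k)) + δ ^ (2 ^ k) * x ^ (2 ^ k) + β * δ ^ (2 ^ k + 1) * x) :=
  linearized_T_bijective_general m k β δ hδ hroot
end

section
/- If k > 1 is an integer with gcd(k,3) = 1, then 3k does not divide 2^k + 1. -/
/-- If `k > 1` is an integer with `gcd(k,3) = 1`, then `3k` does not divide `2^k + 1`. -/
theorem three_k_not_dvd (k : ℕ) (hk : 1 < k) (h3 : Nat.gcd k 3 = 1) :
    ¬ (3 * k ∣ 2 ^ k + 1) := by
  intro h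
  have hkdvd : k ∣ 2 ^ k + 1 := (dvd_mul_left k 3).trans h
  set p := k.minFac with hp
  have hpp : p.Prime := Nat.minFac_prime (by omega)
  have hpk : p ∣ k := Nat.minFac_dvd k
  have hpdvd : p ∣ 2 ^ k + 1 := hpk.trans hkdvd
  -- p is odd
  have hodd : ¬ (2 ∣ 2 ^ k + 1) := by
    intro h2
    have : 2 ∣ 2 ^ k := dvd_pow_self 2 (by omega)
    omega
  have hp2 : p ≠ 2 := fun h2 => hodd (h2 ▸ hpdvd)
  have hp3 : p ≠ 3 := by
    intro h3'
    have : (3 : ℕ) ∣ Nat.gcd k 3 := Nat.dvd_gcd (h3' ▸ hpk) dvd_rfl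
    omega
  have hpge : 3 ≤ p := by
    have := hpp.two_le
    omega
  haveI : Fact p.Prime := ⟨hpp⟩
  -- 2^k = -1 in ZMod p
  have hcast : ((2 ^ k + 1 : ℕ) : ZMod p) = 0 := (ZMod.natCast_eq_zero_iff _ _).mpr hpdvd
  push_cast at hcast
  have hneg : (2 : ZMod p) ^ k = -1 := by linear_combination hcast
  haveI : Fact (2 < p) := ⟨by omega⟩
  have hne : (-1 : ZMod p) ≠ 1 := ZMod.neg_one_ne_one
  set d := orderOf (2 : ZMod p) with hd
  have hd2k : d ∣ 2 * k := by
    apply orderOf_dvd_of_pow_eq_one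
    rw [pow_mul']
    rw [hneg]
    ring
  have hdp1 : d ∣ p - 1 := ZMod.orderOf_dvd_card_sub_one (by
    intro h0
    have : ((2:ℕ) : ZMod p) = 0 := by exact_mod_cast h0
    have := (ZMod.natCast_eq_zero_iff 2 p).mp this
    have := Nat.le_of_dvd (by norm_num) this
    omega)
  -- coprime k (p-1)
  have hcop : Nat.Coprime k (p - 1) := by
    by_contra hc
    set g := Nat.gcd k (p - 1) with hg
    have hg1 : 1 < g := by
      have : g ≠ 1 := hc
      have hgpos : 0 < g := Nat.gcd_pos_of_pos_left _ (by omega)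
      omega
    set q := g.minFac with hq
    have hqp : q.Prime := Nat.minFac_prime (by omega)
    have hqk : q ∣ k := (Nat.minFac_dvd g).trans (Nat.gcd_dvd_left _ _)
    have hqp1 : q ∣ p - 1 := (Nat.minFac_dvd g).trans (Nat.gcd_dvd_right _ _)
    have h1 : p ≤ q := Nat.minFac_le_of_dvd hqp.two_le hqk
    have h2 : q ≤ p - 1 := Nat.le_of_dvd (by omega) hqp1
    omega
  have hdk : Nat.Coprime d k := Nat.Coprime.coprime_dvd_left hdp1 hcop.symm
  have hd2 : d ∣ 2 := (Nat.Coprime.dvd_of_dvd_mul_right hdk hd2k)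
  have h4 : (2 : ZMod p) ^ 2 = 1 := by
    have := orderOf_dvd_iff_pow_eq_one.mp hd2
    exact this
  have : ((3 : ℕ) : ZMod p) = 0 := by
    push_cast
    linear_combination h4
  have := (ZMod.natCast_eq_zero_iff 3 p).mp this
  have := (Nat.prime_dvd_prime_iff_eq hpp (by norm_num)).mp this
  omega
end

section
/- Let k and m be positive integers with gcd(k,m) = 1, and write m = r·p for a positive integer r and a prime p with p ≠ 3. Let β be an element of the subfield F_{2^r} of F_{2^m} (i.e. β^{2^r} = β), and suppose the polynomial P(X) = X^{2^k+1} + X + β has no root in F_{2^r}. Then P(X) has no root in F_{2^m}. -/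
/-!
Let `σ x = x ^ 2 ^ r`. A root `x` outside `F_{2^r}` gives two distinct roots `x` and `σ x`.
For a root `a`, the substitution `x = a + z⁻¹` turns `P x = 0` into the affine equation
`(a ^ 2 ^ k + 1) z ^ 2 ^ k + a z + 1 = 0`, whose additive part has exactly two zeros because
`z ↦ z ^ (2 ^ k - 1)` permutes `F_{2^m}ˣ` when `gcd(k, m) = 1`. So two roots force exactly three.
`σ` permutes these three roots without fixed points, so it is a 3-cycle on them; since
`σ ^ p = id` on `F_{2^m}`, this forces `3 ∣ p`.
-/

open Function Set

theorem isPeriodicPt_three_of_mapsTo {α : Type*} {f : α → α} {a b c : α}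
    (hab : a ≠ b) (hac : a ≠ c) (hbc : b ≠ c) (hinj : InjOn f {a, b, c})
    (hmaps : MapsTo f {a, b, c} {a, b, c}) (hfix : ∀ x ∈ ({a, b, c} : Set α), f x ≠ x) :
    IsPeriodicPt f 3 a := by
  simp only [InjOn, MapsTo, mem_insert_iff, mem_singleton_iff, forall_eq_or_imp,
    forall_eq] at hinj hmaps hfix
  show f (f (f a)) = a
  grind

theorem existsUnique_ne_zero_pow_eq {G₀ : Type*} [GroupWithZero G₀] {n : ℕ}
    (hn : Bijective fun u : G₀ˣ => u ^ n) {c : G₀} (hc : c ≠ 0) :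
    ∃! w : G₀, w ≠ 0 ∧ w ^ n = c := by
  obtain ⟨u, hu⟩ := hn.2 (Units.mk0 c hc)
  refine ⟨u, ⟨u.ne_zero, by simpa using congrArg Units.val hu⟩, ?_⟩
  rintro w ⟨hw, hwc⟩
  have : Units.mk0 w hw = u := hn.1 (Units.ext (by simp [hwc, hu]))
  simpa using congrArg Units.val this

section Field

variable {F : Type*} [Field F]

theorem bijective_units_pow_two_pow_sub_one {k m : ℕ} (hcard : Nat.card F = 2 ^ m)
    (hkm : k.Coprime m) : Bijective fun u : Fˣ => u ^ (2 ^ k - 1) := by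
  apply Nat.Coprime.pow_left_bijective
  rw [Nat.card_units, hcard, Nat.Coprime, Nat.pow_sub_one_gcd_pow_sub_one, Nat.gcd_comm, hkm]
  rfl

theorem exists_forall_mul_pow_succ_add_mul_eq_zero_iff {n : ℕ}
    (hn : Bijective fun u : Fˣ => u ^ n) {e a : F} (he : e ≠ 0) (ha : a ≠ 0) :
    ∃ w ≠ 0, ∀ v, e * v ^ (n + 1) + a * v = 0 ↔ v = 0 ∨ v = w := by
  obtain ⟨w, ⟨hw0, hwn⟩, huniq⟩ := existsUnique_ne_zero_pow_eq hn (c := -a / e) (by simp [ha, he])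
  refine ⟨w, hw0, fun v => ?_⟩
  by_cases hv : v = 0
  · simp [hv]
  have hfac : e * v ^ (n + 1) + a * v = e * v * (v ^ n - -a / e) := by field_simp; ring
  rw [hfac]
  simp only [mul_eq_zero, he, hv, sub_eq_zero, false_or]
  exact ⟨fun h => huniq v ⟨hv, h⟩, fun h => h ▸ hwn⟩

variable {p n : ℕ} [ExpChar F p] {β a e w z₀ : F}

theorem root_add_inv_iff (ha : a ^ (p ^ n + 1) + a + β = 0) {z : F} (hz : z ≠ 0) :
    (a + z⁻¹) ^ (p ^ n + 1) + (a + z⁻¹) + β = 0 ↔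
      (a ^ p ^ n + 1) * z ^ p ^ n + a * z + 1 = 0 := by
  have key : (a + z⁻¹) ^ (p ^ n + 1) + (a + z⁻¹) + β =
      (z ^ (p ^ n + 1))⁻¹ * ((a ^ p ^ n + 1) * z ^ p ^ n + a * z + 1) := by
    rw [pow_succ, add_pow_expChar_pow, pow_succ, inv_pow]
    field_simp
    linear_combination z ^ (p ^ n + 1) * ha
  rw [key, mul_eq_zero, inv_eq_zero, or_iff_right (pow_ne_zero _ hz)]

theorem setOf_root_eq_insert_image (ha : a ^ (p ^ n + 1) + a + β = 0) :
    {x | x ^ (p ^ n + 1) + x + β = 0} =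
      insert a ((fun z => a + z⁻¹) '' {z | (a ^ p ^ n + 1) * z ^ p ^ n + a * z + 1 = 0}) := by
  ext x
  by_cases hx : x = a
  · simp [hx, ha]
  simp only [mem_ofPred_eq, mem_insert_iff, hx, false_or, mem_image]
  constructor
  · intro h
    refine ⟨(x - a)⁻¹, (root_add_inv_iff ha (inv_ne_zero (sub_ne_zero.2 hx))).1 ?_, by simp⟩
    simpa using h
  · rintro ⟨z, hz, rfl⟩
    have hz0 : z ≠ 0 := by rintro rfl; simp [zero_pow (expChar_pow_pos F p n).ne'] at hz
    exact (root_add_inv_iff ha hz0).2 hz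

theorem setOf_mul_pow_add_mul_add_one_eq_pair
    (hz₀ : e * z₀ ^ p ^ n + a * z₀ + 1 = 0)
    (hker : ∀ v, e * v ^ p ^ n + a * v = 0 ↔ v = 0 ∨ v = w) :
    {z | e * z ^ p ^ n + a * z + 1 = 0} = {z₀, z₀ + w} := by
  ext z
  have hshift : e * z ^ p ^ n + a * z + 1 =
      e * (z - z₀) ^ p ^ n + a * (z - z₀) + (e * z₀ ^ p ^ n + a * z₀ + 1) := by
    rw [sub_pow_expChar_pow]; ring
  rw [mem_ofPred_eq, hshift, hz₀, add_zero, hker, sub_eq_zero, sub_eq_iff_eq_add']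
  simp [add_comm]

theorem exists_third_root [CharP F 2] {k m : ℕ} (hcard : Nat.card F = 2 ^ m) (hkm : k.Coprime m)
    {β a b : F} (hβ : β ≠ 0) (hab : a ≠ b) (ha : a ^ (2 ^ k + 1) + a + β = 0)
    (hb : b ^ (2 ^ k + 1) + b + β = 0) :
    ∃ c, c ≠ a ∧ c ≠ b ∧ {x | x ^ (2 ^ k + 1) + x + β = 0} = {a, b, c} := by
  have ha0 : a ≠ 0 := by rintro rfl; simp [hβ] at ha
  have he : a ^ 2 ^ k + 1 ≠ 0 := by
    rw [← one_pow (2 ^ k), ← add_pow_char_pow, pow_ne_zero_iff (by positivity)]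
    intro h
    rw [CharTwo.add_eq_zero.1 h] at ha
    simp [CharTwo.add_self_eq_zero, hβ] at ha
  obtain ⟨w, hw0, hker⟩ := exists_forall_mul_pow_succ_add_mul_eq_zero_iff
    (bijective_units_pow_two_pow_sub_one hcard hkm) he ha0
  rw [Nat.sub_add_cancel Nat.one_le_two_pow] at hker
  set z₀ := (b - a)⁻¹
  have hb' : b = a + z₀⁻¹ := by simp [z₀]
  have hz₀ := (root_add_inv_iff ha (inv_ne_zero (sub_ne_zero.2 hab.symm))).1 (hb' ▸ hb)
  have hpair := setOf_mul_pow_add_mul_add_one_eq_pair hz₀ hker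
  have hsol : z₀ + w ≠ 0 := by
    intro h
    have hmem : z₀ + w ∈ {z | (a ^ 2 ^ k + 1) * z ^ 2 ^ k + a * z + 1 = 0} := by
      rw [hpair]; exact Or.inr rfl
    simp [h] at hmem
  refine ⟨a + (z₀ + w)⁻¹, by simpa using hsol, by simpa [hb'] using hw0, ?_⟩
  rw [setOf_root_eq_insert_image ha, hpair, image_pair, ← hb']

end Field

theorem no_root_in_extension_general (k r p : ℕ) (hr : 0 < r)
    (hp : Nat.Prime p) (hp3 : p ≠ 3) (hgcd : Nat.gcd k (r * p) = 1)
    (β : GaloisField 2 (r * p)) (hβ : β ^ 2 ^ r = β)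
    (hnoroot : ∀ x : GaloisField 2 (r * p),
      x ^ 2 ^ r = x → x ^ (2 ^ k + 1) + x + β ≠ 0) :
    ∀ x : GaloisField 2 (r * p), x ^ (2 ^ k + 1) + x + β ≠ 0 := by
  intro x hx
  have hcard := GaloisField.card 2 (r * p) (Nat.mul_pos hr hp.pos).ne'
  set σ := iterateFrobenius (GaloisField 2 (r * p)) 2 r
  have hβ0 : β ≠ 0 := fun h => hnoroot 0 (by simp) (by simp [h])
  have hmaps : ∀ y, y ^ (2 ^ k + 1) + y + β = 0 → σ y ^ (2 ^ k + 1) + σ y + β = 0 := by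
    intro y hy
    have hσβ : σ β = β := hβ
    rw [← hσβ, ← map_pow, ← map_add, ← map_add, hy, map_zero]
  have hσx : σ x ≠ x := fun h => hnoroot x h hx
  obtain ⟨c, hcx, hcσx, hroots⟩ :=
    exists_third_root hcard hgcd hβ0 hσx.symm hx (hmaps x hx)
  have h3 : IsPeriodicPt σ 3 x := by
    refine isPeriodicPt_three_of_mapsTo hσx.symm hcx.symm hcσx.symm σ.injective.injOn ?_ ?_
    · rw [← hroots]; exact fun y hy => hmaps y hy
    · rw [← hroots]; exact fun y hy hfix => hnoroot y hfix hy
  have hperiod : IsPeriodicPt σ p x := by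
    let := Fintype.ofFinite (GaloisField 2 (r * p))
    show (fun y => y ^ 2 ^ r)^[p] x = x
    rw [pow_iterate, ← pow_mul, ← hcard, Nat.card_eq_fintype_card]
    exact FiniteField.pow_card x
  have h1 := h3.gcd hperiod
  rw [(Nat.coprime_primes Nat.prime_three hp).2 hp3.symm] at h1
  exact hσx h1

/-- Let `gcd(k, m) = 1` with `m = r·p` for a prime `p ≠ 3`.  If `β` lies in the subfield
`F_{2^r}` of `F_{2^m}` and `P(X) = X^(2^k+1) + X + β` has no root in `F_{2^r}`, then
`P(X)` has no root in `F_{2^m}`. -/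
theorem no_root_in_extension (k r p : ℕ) (hk : 0 < k) (hr : 0 < r)
    (hp : Nat.Prime p) (hp3 : p ≠ 3) (hgcd : Nat.gcd k (r * p) = 1)
    (β : GaloisField 2 (r * p)) (hβ : β ^ 2 ^ r = β)
    (hnoroot : ∀ x : GaloisField 2 (r * p),
      x ^ 2 ^ r = x → x ^ (2 ^ k + 1) + x + β ≠ 0) :
    ∀ x : GaloisField 2 (r * p), x ^ (2 ^ k + 1) + x + β ≠ 0 :=
  no_root_in_extension_general k r p hr hp hp3 hgcd β hβ hnoroot
end
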